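/- Let f : [0,1] → ℝ and let c ∈ [0,1]. (1) If f is convex on the interval [0,c], concave on [c,1], and decreasing on [0,1], then L_n(f) is decreasing in n and R_n(f) is increasing in n. (2) If f is concave on [0,c], convex on [c,1], and increasing on [0,1], then L_n(f) is increasing in n and R_n(f) is decreasing in n. -/

import Mathlib

open Finset

/-- Left Riemann sum of `f` over the uniform partition of `[0,1]` into `n` parts. -/
noncomputable def riemannL (f : ℝ → ℝ) (n : ℕ) : ℝ :=
  (1 / (n : ℝ)) * ∑ k ∈ Finset.range n, f ((k : ℝ) / (n : ℝ))

/-- Right Riemann sum of `f` over the uniform partition of `[0,1]` into `n` parts. -/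
noncomputable def riemannR (f : ℝ → ℝ) (n : ℕ) : ℝ :=
  (1 / (n : ℝ)) * ∑ k ∈ Finset.Icc 1 n, f ((k : ℝ) / (n : ℝ))

/-!
Since `f = f ∘ min (·, c) + (f ∘ max (·, c) - f c)` is the sum of a convex and a concave function,
both decreasing on `[0, 1]`, it suffices to show `L_{n+1} ≤ L_n` for decreasing functions that are
convex, or concave, on all of `[0, 1]`. For convex `f`, Jensen's inequality at each fine node
`(k + 1) / (n + 1)`, written as a combination of its coarse neighbours `k / n` and `(k + 1) / n`,
sums to `(n + 1) ∑ f (k / (n + 1)) ≤ (n + 2) ∑ f (k / n) + f 1`, and `f 1 ≤ f (k / n)` closes the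
gap. For concave `f` one interpolates each coarse node `k / n` between `k / (n + 1)` and
`(k + 1) / (n + 1)` instead, and uses `f (k / (n + 1)) ≤ f 0`.

The claims about right sums follow by applying this to `x ↦ -f (1 - x)`, whose left sums are
`-R_n f`, and part (2) is part (1) for `-f`.
-/

open Set

theorem div_mem_Icc_zero_one {x y : ℝ} (hx : 0 ≤ x) (hxy : x ≤ y) : x / y ∈ Icc (0 : ℝ) 1 :=
  ⟨div_nonneg hx (hx.trans hxy), div_le_one_of_le₀ hxy (hx.trans hxy)⟩

theorem ConvexOn.mul_map_div_le {s : Set ℝ} {f : ℝ → ℝ} (hf : ConvexOn ℝ s f) {x y a b : ℝ}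
    (hx : x ∈ s) (hy : y ∈ s) (ha : 0 ≤ a) (hb : 0 ≤ b) (hab : 0 < a + b) :
    (a + b) * f ((a * x + b * y) / (a + b)) ≤ a * f x + b * f y := by
  have h := (convexOn_iff_div.mp hf).2 hx hy ha hb hab
  simp only [smul_eq_mul] at h
  calc (a + b) * f ((a * x + b * y) / (a + b))
      = (a + b) * f (a / (a + b) * x + b / (a + b) * y) := by congr 2; field_simp
    _ ≤ (a + b) * (a / (a + b) * f x + b / (a + b) * f y) := by gcongr
    _ = a * f x + b * f y := by field_simp

theorem ConcaveOn.le_mul_map_div {s : Set ℝ} {f : ℝ → ℝ} (hf : ConcaveOn ℝ s f) {x y a b : ℝ}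
    (hx : x ∈ s) (hy : y ∈ s) (ha : 0 ≤ a) (hb : 0 ≤ b) (hab : 0 < a + b) :
    a * f x + b * f y ≤ (a + b) * f ((a * x + b * y) / (a + b)) := by
  have h := hf.neg.mul_map_div_le hx hy ha hb hab
  simp only [Pi.neg_apply] at h
  linarith

theorem ConvexOn.comp_const_sub {s : Set ℝ} {f : ℝ → ℝ} (hf : ConvexOn ℝ s f) (a : ℝ) :
    ConvexOn ℝ ((a - ·) ⁻¹' s) (fun x => f (a - x)) :=
  hf.comp_affineMap (AffineMap.const ℝ ℝ a - AffineMap.id ℝ ℝ)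

theorem ConcaveOn.comp_const_sub {s : Set ℝ} {f : ℝ → ℝ} (hf : ConcaveOn ℝ s f) (a : ℝ) :
    ConcaveOn ℝ ((a - ·) ⁻¹' s) (fun x => f (a - x)) :=
  hf.comp_affineMap (AffineMap.const ℝ ℝ a - AffineMap.id ℝ ℝ)

theorem min_image_Ici {a c : ℝ} (hac : a ≤ c) : (min · c) '' Ici a = Icc a c := by
  ext y
  constructor
  · rintro ⟨x, hx, rfl⟩
    exact ⟨le_min hx hac, min_le_right x c⟩
  · exact fun hy => ⟨y, hy.1, min_eq_left hy.2⟩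

theorem max_image_Iic {c b : ℝ} (hcb : c ≤ b) : (max · c) '' Iic b = Icc c b := by
  ext y
  constructor
  · rintro ⟨x, hx, rfl⟩
    exact ⟨le_max_right x c, max_le hx hcb⟩
  · exact fun hy => ⟨y, hy.2, max_eq_left hy.1⟩

theorem AntitoneOn.comp_min {f : ℝ → ℝ} {a c : ℝ} (hac : a ≤ c) (hf : AntitoneOn f (Icc a c)) :
    AntitoneOn (fun x => f (min x c)) (Ici a) := fun _ hx _ hy hxy =>
  hf ⟨le_min hx hac, min_le_right _ c⟩ ⟨le_min hy hac, min_le_right _ c⟩ (min_le_min_right c hxy)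

theorem AntitoneOn.comp_max {f : ℝ → ℝ} {c b : ℝ} (hcb : c ≤ b) (hf : AntitoneOn f (Icc c b)) :
    AntitoneOn (fun x => f (max x c)) (Iic b) := fun _ hx _ hy hxy =>
  hf ⟨le_max_right _ c, max_le hx hcb⟩ ⟨le_max_right _ c, max_le hy hcb⟩ (max_le_max_right c hxy)

theorem ConvexOn.comp_min {f : ℝ → ℝ} {a c : ℝ} (hac : a ≤ c) (hf : ConvexOn ℝ (Icc a c) f)
    (hf' : AntitoneOn f (Icc a c)) : ConvexOn ℝ (Ici a) (fun x => f (min x c)) := by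
  rw [← min_image_Ici hac] at hf hf'
  exact hf.comp_concaveOn ((concaveOn_id (convex_Ici a)).inf (concaveOn_const c (convex_Ici a))) hf'

theorem ConcaveOn.comp_max {f : ℝ → ℝ} {c b : ℝ} (hcb : c ≤ b) (hf : ConcaveOn ℝ (Icc c b) f)
    (hf' : AntitoneOn f (Icc c b)) : ConcaveOn ℝ (Iic b) (fun x => f (max x c)) := by
  rw [← max_image_Iic hcb] at hf hf'
  exact hf.comp_convexOn ((convexOn_id (convex_Iic b)).sup (convexOn_const c (convex_Iic b))) hf'

theorem sum_range_succ_mul_add_sub_mul_succ (a : ℕ → ℝ) (n : ℕ) :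
    ∑ k ∈ range n, ((k + 1) * a k + (n - k) * a (k + 1)) =
      (n + 2) * ∑ k ∈ range n, a k + a n - (n + 1) * a 0 := by
  let g : ℕ → ℝ := fun k => (n + 1 - k) * a k
  calc ∑ k ∈ range n, ((k + 1) * a k + (n - k) * a (k + 1))
      = ∑ k ∈ range n, ((n + 2) * a k + (g (k + 1) - g k)) :=
        sum_congr rfl fun k _ => by simp only [g]; push_cast; ring
    _ = (n + 2) * ∑ k ∈ range n, a k + a n - (n + 1) * a 0 := by
        rw [sum_add_distrib, ← mul_sum, sum_range_sub]
        simp only [g]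
        push_cast
        ring

theorem sum_range_sub_mul_add_mul_succ (b : ℕ → ℝ) (n : ℕ) :
    ∑ k ∈ range n, ((n - k) * b k + k * b (k + 1)) =
      (n - 1) * ∑ k ∈ range (n + 1), b k + b 0 := by
  let g : ℕ → ℝ := fun k => (k - 1) * b k
  calc ∑ k ∈ range n, ((n - k) * b k + k * b (k + 1))
      = ∑ k ∈ range n, ((n - 1) * b k + (g (k + 1) - g k)) :=
        sum_congr rfl fun k _ => by simp only [g]; push_cast; ring
    _ = (n - 1) * ∑ k ∈ range (n + 1), b k + b 0 := by
        rw [sum_add_distrib, ← mul_sum, sum_range_sub, sum_range_succ]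
        simp only [g]
        push_cast
        ring

theorem riemannL_succ_le_iff (f : ℝ → ℝ) {n : ℕ} (hn : 0 < n) :
    riemannL f (n + 1) ≤ riemannL f n ↔
      n * ∑ k ∈ range (n + 1), f (k / (n + 1)) ≤ (n + 1) * ∑ k ∈ range n, f (k / n) := by
  have hn' : (0 : ℝ) < n := by exact_mod_cast hn
  unfold riemannL
  push_cast
  rw [one_div_mul_eq_div, one_div_mul_eq_div, div_le_div_iff₀ (by positivity) hn', mul_comm,
    mul_comm (∑ k ∈ range n, _)]

theorem riemannL_succ_le_of_convexOn {f : ℝ → ℝ} (hf : ConvexOn ℝ (Icc 0 1) f)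
    (hf' : AntitoneOn f (Icc 0 1)) {n : ℕ} (hn : 0 < n) : riemannL f (n + 1) ≤ riemannL f n := by
  have hn' : (0 : ℝ) < n := by exact_mod_cast hn
  have hstep : ∀ k ∈ range n, ((n : ℝ) + 1) * f ((k + 1) / (n + 1)) ≤
      (k + 1) * f (k / n) + (n - k) * f ((k + 1) / n) := by
    intro k hk
    have hkn : (k : ℝ) + 1 ≤ n := by exact_mod_cast mem_range.mp hk
    have h := hf.mul_map_div_le
      (div_mem_Icc_zero_one (Nat.cast_nonneg k) (by linarith : (k : ℝ) ≤ n))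
      (div_mem_Icc_zero_one (by positivity) hkn) (a := k + 1) (b := n - k)
      (by positivity) (by linarith) (by linarith)
    rw [show (k : ℝ) + 1 + (n - k) = n + 1 by ring] at h
    have hpt : ((k + 1) * (k / n) + (n - k) * ((k + 1) / n)) / (n + 1) =
        ((k : ℝ) + 1) / (n + 1) := by
      field_simp
      ring
    rwa [hpt] at h
  have hsum : ((n : ℝ) + 1) * ∑ k ∈ range (n + 1), f (k / (n + 1)) ≤
      (n + 2) * ∑ k ∈ range n, f (k / n) + f 1 := by
    have h := sum_le_sum hstep
    rw [← mul_sum] at h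
    have h' := sum_range_succ_mul_add_sub_mul_succ (fun k => f (k / n)) n
    simp only [Nat.cast_add, Nat.cast_one, Nat.cast_zero, zero_div, div_self hn'.ne'] at h'
    rw [sum_range_succ']
    push_cast
    rw [zero_div]
    linarith
  have hlow : n * f 1 ≤ ∑ k ∈ range n, f (k / n) := by
    have hmem : ∀ k ∈ range n, (k : ℝ) / n ∈ Icc (0 : ℝ) 1 := fun k hk =>
      div_mem_Icc_zero_one (Nat.cast_nonneg k) (by exact_mod_cast (mem_range.mp hk).le)
    have h := card_nsmul_le_sum (range n) (fun k : ℕ => f (k / n)) (f 1) fun k hk =>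
      hf' (hmem k hk) (right_mem_Icc.mpr zero_le_one) (hmem k hk).2
    simpa using h
  rw [riemannL_succ_le_iff f hn]
  nlinarith

theorem riemannL_succ_le_of_concaveOn {f : ℝ → ℝ} (hf : ConcaveOn ℝ (Icc 0 1) f)
    (hf' : AntitoneOn f (Icc 0 1)) {n : ℕ} (hn : 0 < n) : riemannL f (n + 1) ≤ riemannL f n := by
  have hn' : (0 : ℝ) < n := by exact_mod_cast hn
  have hstep : ∀ k ∈ range n, (n - k) * f (k / (n + 1)) + k * f ((k + 1) / (n + 1)) ≤
      n * f (k / n) := by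
    intro k hk
    have hkn : (k : ℝ) + 1 ≤ n := by exact_mod_cast mem_range.mp hk
    have h := hf.le_mul_map_div
      (div_mem_Icc_zero_one (Nat.cast_nonneg k) (by linarith : (k : ℝ) ≤ n + 1))
      (div_mem_Icc_zero_one (by positivity) (by linarith : (k : ℝ) + 1 ≤ n + 1))
      (a := n - k) (b := k) (by linarith) (Nat.cast_nonneg k) (by linarith)
    rw [sub_add_cancel] at h
    have hpt : ((n - k) * (k / (n + 1)) + k * ((k + 1) / (n + 1))) / n = (k : ℝ) / n := by
      field_simp
      ring
    rwa [hpt] at h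
  have hsum : ((n : ℝ) - 1) * ∑ k ∈ range (n + 1), f (k / (n + 1)) + f 0 ≤
      n * ∑ k ∈ range n, f (k / n) := by
    have h := sum_le_sum hstep
    rw [← mul_sum] at h
    have h' := sum_range_sub_mul_add_mul_succ (fun k => f (k / (n + 1))) n
    simp only [Nat.cast_add, Nat.cast_one, Nat.cast_zero, zero_div] at h'
    linarith
  have hup : ∑ k ∈ range (n + 1), f (k / (n + 1)) ≤ (n + 1) * f 0 := by
    have h := sum_le_card_nsmul (range (n + 1)) (fun k : ℕ => f (k / (n + 1))) (f 0) fun k hk =>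
      hf' (left_mem_Icc.mpr zero_le_one)
        (div_mem_Icc_zero_one (Nat.cast_nonneg k) (by exact_mod_cast (mem_range.mp hk).le))
        (by positivity)
    simpa using h
  rw [riemannL_succ_le_iff f hn]
  nlinarith

theorem riemannL_add (f g : ℝ → ℝ) (n : ℕ) :
    riemannL (f + g) n = riemannL f n + riemannL g n := by
  simp only [riemannL, Pi.add_apply, sum_add_distrib, mul_add]

theorem riemannL_neg (f : ℝ → ℝ) (n : ℕ) : riemannL (-f) n = -riemannL f n := by
  simp only [riemannL, Pi.neg_apply, sum_neg_distrib, mul_neg]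

theorem riemannR_neg (f : ℝ → ℝ) (n : ℕ) : riemannR (-f) n = -riemannR f n := by
  simp only [riemannR, Pi.neg_apply, sum_neg_distrib, mul_neg]

theorem riemannL_comp_one_sub (f : ℝ → ℝ) (n : ℕ) :
    riemannL (fun x => f (1 - x)) n = riemannR f n := by
  unfold riemannL riemannR
  congr 1
  refine sum_nbij' (n - ·) (n - ·) ?_ ?_ ?_ ?_ ?_ <;> intro k hk <;>
    simp only [Finset.mem_range, Finset.mem_Icc] at hk ⊢
  · omega
  · omega
  · omega
  · omega
  · have hn : (n : ℝ) ≠ 0 := by exact_mod_cast (Nat.zero_lt_of_lt hk).ne'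
    rw [Nat.cast_sub hk.le]
    field_simp

theorem riemannL_succ_le_of_convexOn_concaveOn {f : ℝ → ℝ} {c : ℝ} (hc : c ∈ Icc (0 : ℝ) 1)
    (hcvx : ConvexOn ℝ (Icc 0 c) f) (hccv : ConcaveOn ℝ (Icc c 1) f)
    (hanti : AntitoneOn f (Icc 0 1)) {n : ℕ} (hn : 0 < n) :
    riemannL f (n + 1) ≤ riemannL f n := by
  have hanti₁ := hanti.mono (Icc_subset_Icc_right hc.2)
  have hanti₂ := hanti.mono (Icc_subset_Icc_left hc.1)
  have hmin := riemannL_succ_le_of_convexOn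
    ((hcvx.comp_min hc.1 hanti₁).subset Icc_subset_Ici_self (convex_Icc 0 1))
    ((hanti₁.comp_min hc.1).mono Icc_subset_Ici_self) hn
  have hmax := riemannL_succ_le_of_concaveOn (f := fun x => f (max x c) - f c)
    (((hccv.comp_max hc.2 hanti₂).subset Icc_subset_Iic_self (convex_Icc 0 1)).sub
      (convexOn_const (f c) (convex_Icc 0 1)))
    (fun x hx y hy hxy => sub_le_sub_right
      ((hanti₂.comp_max hc.2).mono Icc_subset_Iic_self hx hy hxy) (f c)) hn
  have hsplit : f = (fun x => f (min x c)) + (fun x => f (max x c) - f c) := by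
    funext x
    rcases le_total x c with h | h <;> simp [h]
  rw [hsplit, riemannL_add, riemannL_add]
  linarith

theorem riemannR_le_succ_of_convexOn_concaveOn {f : ℝ → ℝ} {c : ℝ} (hc : c ∈ Icc (0 : ℝ) 1)
    (hcvx : ConvexOn ℝ (Icc 0 c) f) (hccv : ConcaveOn ℝ (Icc c 1) f)
    (hanti : AntitoneOn f (Icc 0 1)) {n : ℕ} (hn : 0 < n) :
    riemannR f n ≤ riemannR f (n + 1) := by
  have hcvx' : ConvexOn ℝ (Icc 0 (1 - c)) (-fun x => f (1 - x)) := by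
    simpa only [preimage_const_sub_Icc, sub_self] using (hccv.comp_const_sub 1).neg
  have hccv' : ConcaveOn ℝ (Icc (1 - c) 1) (-fun x => f (1 - x)) := by
    simpa only [preimage_const_sub_Icc, sub_zero] using (hcvx.comp_const_sub 1).neg
  have hanti' : AntitoneOn (-fun x => f (1 - x)) (Icc 0 1) := fun x hx y hy hxy =>
    neg_le_neg (hanti (Icc.one_sub_mem hy) (Icc.one_sub_mem hx) (sub_le_sub_left hxy 1))
  have h := riemannL_succ_le_of_convexOn_concaveOn (Icc.one_sub_mem hc) hcvx' hccv' hanti' hn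
  simp only [riemannL_neg, riemannL_comp_one_sub] at h
  linarith

theorem stmt5 (f : ℝ → ℝ) (c : ℝ) (hc : c ∈ Set.Icc (0:ℝ) 1) :
    ((ConvexOn ℝ (Set.Icc (0:ℝ) c) f ∧ ConcaveOn ℝ (Set.Icc c 1) f ∧
        AntitoneOn f (Set.Icc (0:ℝ) 1)) →
      (∀ n : ℕ, 1 ≤ n → riemannL f (n + 1) ≤ riemannL f n) ∧
      (∀ n : ℕ, 1 ≤ n → riemannR f n ≤ riemannR f (n + 1))) ∧
    ((ConcaveOn ℝ (Set.Icc (0:ℝ) c) f ∧ ConvexOn ℝ (Set.Icc c 1) f ∧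
        MonotoneOn f (Set.Icc (0:ℝ) 1)) →
      (∀ n : ℕ, 1 ≤ n → riemannL f n ≤ riemannL f (n + 1)) ∧
      (∀ n : ℕ, 1 ≤ n → riemannR f (n + 1) ≤ riemannR f n)) := by
  refine ⟨fun ⟨hcvx, hccv, hanti⟩ => ⟨fun n hn => ?_, fun n hn => ?_⟩,
    fun ⟨hccv, hcvx, hmono⟩ => ⟨fun n hn => ?_, fun n hn => ?_⟩⟩
  · exact riemannL_succ_le_of_convexOn_concaveOn hc hcvx hccv hanti hn
  · exact riemannR_le_succ_of_convexOn_concaveOn hc hcvx hccv hanti hn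
  · have h := riemannL_succ_le_of_convexOn_concaveOn hc hccv.neg hcvx.neg hmono.neg hn
    rwa [riemannL_neg, riemannL_neg, neg_le_neg_iff] at h
  · have h := riemannR_le_succ_of_convexOn_concaveOn hc hccv.neg hcvx.neg hmono.neg hn
    rwa [riemannR_neg, riemannR_neg, neg_le_neg_iff] at h
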